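/- Let G be the cascade reaction network on the 13 species W, W*, Z, Z*, E_1, E_2, E_3, WE_1, W*E_2, ZW*, Z*E_3 with reactions W+E_1⇌WE_1, WE_1→W*+E_1, W*+E_2⇌W*E_2, W*E_2→W+E_2, Z+W*⇌ZW*, ZW*→Z*+W*, Z*+E_3⇌Z*E_3, Z*E_3→Z+E_3. Then the semi-open network G_{ℰ⇌0} with ℰ = {E_1, E_2, E_3, W*} open (inflow and outflow reactions added for each species of ℰ) is monostationary with mass action kinetics. -/

import Mathlib

/-- A reaction `y → y'` is a pair of complexes, each a vector of
nonnegative integer coefficients indexed by the species: the source and the target. -/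
abbrev Reaction (S : Type) : Type := (S → ℕ) × (S → ℕ)

section General

variable {S : Type} [Fintype S] [DecidableEq S]

/-- The complex consisting of a single copy of species `s`. -/
def unitC (s : S) : S → ℕ := fun t => if t = s then 1 else 0

/-- The complex `a + b`. -/
def pairC (a b : S) : S → ℕ := fun t => (if t = a then 1 else 0) + (if t = b then 1 else 0)

/-- The mass action right-hand side `f_κ` of a network `R` with rates `κ`. -/
def massAction (R : Finset (Reaction S)) (κ : Reaction S → ℝ) (x : S → ℝ) : S → ℝ :=
  fun s => ∑ r ∈ R, κ r * (∏ t, x t ^ r.1 t) * ((r.2 s : ℝ) - (r.1 s : ℝ))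

/-- The stoichiometric subspace of a network: the span of its reaction vectors. -/
def stoichSubspace (R : Finset (Reaction S)) : Submodule ℝ (S → ℝ) :=
  Submodule.span ℝ ((fun r : Reaction S => fun s => ((r.2 s : ℝ) - (r.1 s : ℝ))) '' ↑R)

/-- A positive steady state of the mass action system `(R, κ)`. -/
def isPosSteadyState (R : Finset (Reaction S)) (κ : Reaction S → ℝ) (x : S → ℝ) : Prop :=
  (∀ s, 0 < x s) ∧ massAction R κ x = 0

/-- A steady state is nondegenerate if the kernel of the Jacobian of the mass action
right-hand side intersects the stoichiometric subspace trivially. -/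
def nondegenerate (R : Finset (Reaction S)) (κ : Reaction S → ℝ) (x : S → ℝ) : Prop :=
  ∀ v ∈ stoichSubspace R, fderiv ℝ (massAction R κ) x v = 0 → v = 0

/-- A network admits nondegenerate multistationarity if for some positive rates there are
two distinct nondegenerate positive steady states in the same stoichiometric
compatibility class. -/
def admitsNondegMultistationarity (R : Finset (Reaction S)) : Prop :=
  ∃ κ : Reaction S → ℝ, (∀ r ∈ R, 0 < κ r) ∧
    ∃ x y : S → ℝ, x ≠ y ∧
      isPosSteadyState R κ x ∧ isPosSteadyState R κ y ∧
      nondegenerate R κ x ∧ nondegenerate R κ y ∧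
      y - x ∈ stoichSubspace R

/-- The inflow reaction `0 → s`. -/
def inflow (s : S) : Reaction S := (fun _ => 0, unitC s)

/-- The outflow reaction `s → 0`. -/
def outflow (s : S) : Reaction S := (unitC s, fun _ => 0)

/-- The open network on `E`: add inflow and outflow reactions for every species of `E`. -/
def openOn (R : Finset (Reaction S)) (E : Finset S) : Finset (Reaction S) :=
  R ∪ E.image inflow ∪ E.image outflow

/-- A conservation law: a vector orthogonal to the stoichiometric subspace. -/
def conservationLaw (R : Finset (Reaction S)) (w : S → ℝ) : Prop :=
  ∀ v ∈ stoichSubspace R, ∑ s, w s * v s = 0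

/-- A set `E` of species is independently conserved in `R` if there are conservation laws
`L e` for `e ∈ E` such that `L e` has a nonzero coordinate at `e` and zero coordinate at
`e` for every other `L e'`, `e' ∈ E`. -/
def IndepConserved (R : Finset (Reaction S)) (E : Finset S) : Prop :=
  ∃ L : S → (S → ℝ), ∀ e ∈ E,
    conservationLaw R (L e) ∧ L e e ≠ 0 ∧ ∀ e' ∈ E, e' ≠ e → L e' e = 0

/-- A species is closed in `R` if neither its inflow nor its outflow is a reaction of `R`. -/
def ClosedIn (R : Finset (Reaction S)) (s : S) : Prop :=
  inflow s ∉ R ∧ outflow s ∉ R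

/-- Projection of a complex onto the coordinates outside `E`. -/
def projC (E : Finset S) (y : S → ℕ) : {s : S // s ∉ E} → ℕ := fun s => y s.val

/-- Projection of a reaction onto the coordinates outside `E`. -/
def projR (E : Finset S) (r : Reaction S) : Reaction {s : S // s ∉ E} :=
  (projC E r.1, projC E r.2)

/-- The projected network `G₋E` on the species outside `E`: project all reactions and
remove self-loops. -/
def projNet (R : Finset (Reaction S)) (E : Finset S) : Finset (Reaction {s : S // s ∉ E}) :=
  (R.image (projR E)).filter fun r => r.1 ≠ r.2

/-- Inclusion of a reaction on the species of `E` into a reaction on all of `S`. -/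
def inclR (E : Finset S) (r : Reaction {s : S // s ∈ E}) : Reaction S :=
  (fun s => if h : s ∈ E then r.1 ⟨s, h⟩ else 0,
   fun s => if h : s ∈ E then r.2 ⟨s, h⟩ else 0)

/-- `R` has at most `l` positive steady states in each stoichiometric compatibility class,
for every choice of positive reaction rates: there is no injective family of `l + 1`
positive steady states lying pairwise in the same compatibility class. -/
def atMostPosSS (R : Finset (Reaction S)) (l : ℕ) : Prop :=
  ∀ κ : Reaction S → ℝ, (∀ r ∈ R, 0 < κ r) →
    ∀ f : Fin (l + 1) → (S → ℝ),
      (∀ j, isPosSteadyState R κ (f j)) →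
      (∀ j k, f k - f j ∈ stoichSubspace R) →
      ¬ Function.Injective f

/-- Monostationarity: at most one positive steady state in each stoichiometric
compatibility class, for every choice of positive rates. -/
def monostationary (R : Finset (Reaction S)) : Prop :=
  atMostPosSS R 1

end General

/-- Species of the sequential `n`-site phosphorylation–dephosphorylation cycle:
the enzymes `E`, `F`, the substrates `S i` for `i = 0, …, n`, and the intermediates
`ES i` for `i = 0, …, n-1` and `FS i` (denoting `FS_{i+1}`) for `i = 0, …, n-1`. -/
inductive PS (n : ℕ) : Type
  | E : PS n
  | F : PS n
  | S : Fin (n + 1) → PS n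
  | ES : Fin n → PS n
  | FS : Fin n → PS n
deriving DecidableEq, Fintype

/-- The sequential `n`-site phosphorylation–dephosphorylation cycle `𝒫ⁿ`, with the `6n`
reactions `S_i + E ⇌ ES_i`, `ES_i → S_{i+1} + E` for `i = 0, …, n-1` and
`S_i + F ⇌ FS_i`, `FS_i → S_{i-1} + F` for `i = 1, …, n`. -/
def Pcycle (n : ℕ) : Finset (Reaction (PS n)) :=
  (Finset.univ.image fun i : Fin n => (pairC (PS.S i.castSucc) PS.E, unitC (PS.ES i))) ∪
  (Finset.univ.image fun i : Fin n => (unitC (PS.ES i), pairC (PS.S i.castSucc) PS.E)) ∪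
  (Finset.univ.image fun i : Fin n => (unitC (PS.ES i), pairC (PS.S i.succ) PS.E)) ∪
  (Finset.univ.image fun i : Fin n => (pairC (PS.S i.succ) PS.F, unitC (PS.FS i))) ∪
  (Finset.univ.image fun i : Fin n => (unitC (PS.FS i), pairC (PS.S i.succ) PS.F)) ∪
  (Finset.univ.image fun i : Fin n => (unitC (PS.FS i), pairC (PS.S i.castSucc) PS.F))

/-- The species of the cascade network. -/
inductive CSp : Type
  | W | Wstar | Z | Zstar | E1 | E2 | E3 | WE1 | WstarE2 | ZWstar | ZstarE3
deriving DecidableEq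

instance : Fintype CSp where
  elems := {CSp.W, CSp.Wstar, CSp.Z, CSp.Zstar, CSp.E1, CSp.E2, CSp.E3, CSp.WE1,
    CSp.WstarE2, CSp.ZWstar, CSp.ZstarE3}
  complete := by intro x; cases x <;> decide

open CSp in
/-- The cascade network: `W + E₁ ⇌ WE₁ → W* + E₁`, `W* + E₂ ⇌ W*E₂ → W + E₂`,
`Z + W* ⇌ ZW* → Z* + W*`, `Z* + E₃ ⇌ Z*E₃ → Z + E₃`. -/
def cascade : Finset (Reaction CSp) :=
  { (pairC W E1, unitC WE1), (unitC WE1, pairC W E1), (unitC WE1, pairC Wstar E1),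
    (pairC Wstar E2, unitC WstarE2), (unitC WstarE2, pairC Wstar E2),
    (unitC WstarE2, pairC W E2),
    (pairC Z Wstar, unitC ZWstar), (unitC ZWstar, pairC Z Wstar),
    (unitC ZWstar, pairC Zstar Wstar),
    (pairC Zstar E3, unitC ZstarE3), (unitC ZstarE3, pairC Zstar E3),
    (unitC ZstarE3, pairC Z E3) }

section AuxGeneral
variable {S : Type} [Fintype S] [DecidableEq S]

lemma prod_unitC' (x : S → ℝ) (s : S) : (∏ t, x t ^ unitC s t) = x s := by
  simp [unitC, pow_ite, Finset.prod_ite_eq']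

lemma prod_pairC' (x : S → ℝ) (a b : S) : (∏ t, x t ^ pairC a b t) = x a * x b := by
  simp only [pairC, pow_add]
  rw [Finset.prod_mul_distrib]
  simp [pow_ite, Finset.prod_ite_eq']

end AuxGeneral

open CSp in
/-- The 20 reactions of the open cascade network, as an explicit list. -/
def cascList : List (Reaction CSp) :=
  [ (pairC W E1, unitC WE1), (unitC WE1, pairC W E1), (unitC WE1, pairC Wstar E1),
    (pairC Wstar E2, unitC WstarE2), (unitC WstarE2, pairC Wstar E2),
    (unitC WstarE2, pairC W E2),
    (pairC Z Wstar, unitC ZWstar), (unitC ZWstar, pairC Z Wstar),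
    (unitC ZWstar, pairC Zstar Wstar),
    (pairC Zstar E3, unitC ZstarE3), (unitC ZstarE3, pairC Zstar E3),
    (unitC ZstarE3, pairC Z E3),
    inflow E1, inflow E2, inflow E3, inflow Wstar,
    outflow E1, outflow E2, outflow E3, outflow Wstar ]

lemma cascR_eq : openOn cascade {CSp.E1, CSp.E2, CSp.E3, CSp.Wstar} = cascList.toFinset := by
  decide

lemma cascList_nodup : cascList.Nodup := by decide

open CSp in
lemma steady_system (κ : Reaction CSp → ℝ) (x : CSp → ℝ)
    (h : massAction (openOn cascade {CSp.E1, CSp.E2, CSp.E3, CSp.Wstar}) κ x = 0) :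
    κ (pairC W E1, unitC WE1) * (x W * x E1)
      = (κ (unitC WE1, pairC W E1) + κ (unitC WE1, pairC Wstar E1)) * x WE1 ∧
    κ (pairC Wstar E2, unitC WstarE2) * (x Wstar * x E2)
      = (κ (unitC WstarE2, pairC Wstar E2) + κ (unitC WstarE2, pairC W E2)) * x WstarE2 ∧
    κ (pairC Z Wstar, unitC ZWstar) * (x Z * x Wstar)
      = (κ (unitC ZWstar, pairC Z Wstar) + κ (unitC ZWstar, pairC Zstar Wstar)) * x ZWstar ∧
    κ (pairC Zstar E3, unitC ZstarE3) * (x Zstar * x E3)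
      = (κ (unitC ZstarE3, pairC Zstar E3) + κ (unitC ZstarE3, pairC Z E3)) * x ZstarE3 ∧
    κ (inflow E1) = κ (outflow E1) * x E1 ∧
    κ (inflow E2) = κ (outflow E2) * x E2 ∧
    κ (inflow E3) = κ (outflow E3) * x E3 ∧
    κ (inflow Wstar) = κ (outflow Wstar) * x Wstar ∧
    κ (unitC WE1, pairC Wstar E1) * x WE1 = κ (unitC WstarE2, pairC W E2) * x WstarE2 ∧
    κ (unitC ZWstar, pairC Zstar Wstar) * x ZWstar = κ (unitC ZstarE3, pairC Z E3) * x ZstarE3 := by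
  have hWE1 := congrFun h CSp.WE1
  have hWsE2 := congrFun h CSp.WstarE2
  have hZWs := congrFun h CSp.ZWstar
  have hZsE3 := congrFun h CSp.ZstarE3
  have hE1 := congrFun h CSp.E1
  have hE2 := congrFun h CSp.E2
  have hE3 := congrFun h CSp.E3
  have hWs := congrFun h CSp.Wstar
  have hW := congrFun h CSp.W
  have hZ := congrFun h CSp.Z
  simp only [massAction, cascR_eq, List.sum_toFinset _ cascList_nodup] at hWE1 hWsE2 hZWs hZsE3 hE1 hE2 hE3 hWs hW hZ
  simp only [cascList, List.map_cons, List.map_nil, List.sum_cons, List.sum_nil,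
    prod_unitC', prod_pairC', Pi.zero_apply] at hWE1 hWsE2 hZWs hZsE3 hE1 hE2 hE3 hWs hW hZ
  simp [inflow, outflow, unitC, pairC] at hWE1 hWsE2 hZWs hZsE3 hE1 hE2 hE3 hWs hW hZ
  simp only [inflow, outflow]
  refine ⟨?_, ?_, ?_, ?_, ?_, ?_, ?_, ?_, ?_, ?_⟩
  · linarith
  · linarith
  · linarith
  · linarith
  · linarith
  · linarith
  · linarith
  · linarith
  · linarith
  · linarith

open CSp in
lemma casc_cons (v : CSp → ℝ)
    (hv : v ∈ stoichSubspace (openOn cascade {CSp.E1, CSp.E2, CSp.E3, CSp.Wstar})) :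
    v Z + v Zstar + v ZWstar + v ZstarE3 = 0 := by
  have hle : stoichSubspace (openOn cascade {CSp.E1, CSp.E2, CSp.E3, CSp.Wstar}) ≤
      LinearMap.ker ((LinearMap.proj Z : (CSp → ℝ) →ₗ[ℝ] ℝ) + LinearMap.proj Zstar
        + LinearMap.proj ZWstar + LinearMap.proj ZstarE3) := by
    rw [stoichSubspace, Submodule.span_le]
    rintro _ ⟨r, hr, rfl⟩
    have hr' : r ∈ cascList := by
      rw [Finset.mem_coe, cascR_eq, List.mem_toFinset] at hr; exact hr
    fin_cases hr' <;>
      simp [LinearMap.mem_ker, inflow, outflow, unitC, pairC]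
  have := hle hv
  simpa using this

theorem cascade_enzyme_open_monostationary' :
    monostationary (openOn cascade {CSp.E1, CSp.E2, CSp.E3, CSp.Wstar}) := by
  intro κ hκ f hss hcomp hinj
  have hkmem : ∀ r ∈ cascList, 0 < κ r := fun r hr =>
    hκ r (by rw [cascR_eq]; exact List.mem_toFinset.2 hr)
  obtain ⟨pa, ha⟩ := hss 0
  obtain ⟨pb, hb⟩ := hss 1
  obtain ⟨a1, a2, a3, a4, a5, a6, a7, a8, a9, a10⟩ := steady_system κ (f 0) ha
  obtain ⟨b1, b2, b3, b4, b5, b6, b7, b8, b9, b10⟩ := steady_system κ (f 1) hb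
  set k1 := κ (pairC CSp.W CSp.E1, unitC CSp.WE1) with hk1
  set k2 := κ (unitC CSp.WE1, pairC CSp.W CSp.E1) with hk2
  set k3 := κ (unitC CSp.WE1, pairC CSp.Wstar CSp.E1) with hk3
  set k4 := κ (pairC CSp.Wstar CSp.E2, unitC CSp.WstarE2) with hk4
  set k5 := κ (unitC CSp.WstarE2, pairC CSp.Wstar CSp.E2) with hk5
  set k6 := κ (unitC CSp.WstarE2, pairC CSp.W CSp.E2) with hk6
  set k7 := κ (pairC CSp.Z CSp.Wstar, unitC CSp.ZWstar) with hk7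
  set k8 := κ (unitC CSp.ZWstar, pairC CSp.Z CSp.Wstar) with hk8
  set k9 := κ (unitC CSp.ZWstar, pairC CSp.Zstar CSp.Wstar) with hk9
  set k10 := κ (pairC CSp.Zstar CSp.E3, unitC CSp.ZstarE3) with hk10
  set k11 := κ (unitC CSp.ZstarE3, pairC CSp.Zstar CSp.E3) with hk11
  set k12 := κ (unitC CSp.ZstarE3, pairC CSp.Z CSp.E3) with hk12
  have pk1 : 0 < k1 := hkmem _ (by decide)
  have pk2 : 0 < k2 := hkmem _ (by decide)
  have pk3 : 0 < k3 := hkmem _ (by decide)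
  have pk4 : 0 < k4 := hkmem _ (by decide)
  have pk5 : 0 < k5 := hkmem _ (by decide)
  have pk6 : 0 < k6 := hkmem _ (by decide)
  have pk7 : 0 < k7 := hkmem _ (by decide)
  have pk8 : 0 < k8 := hkmem _ (by decide)
  have pk9 : 0 < k9 := hkmem _ (by decide)
  have pk10 : 0 < k10 := hkmem _ (by decide)
  have pk11 : 0 < k11 := hkmem _ (by decide)
  have pk12 : 0 < k12 := hkmem _ (by decide)
  have po1 : 0 < κ (outflow CSp.E1) := hkmem _ (by decide)
  have po2 : 0 < κ (outflow CSp.E2) := hkmem _ (by decide)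
  have po3 : 0 < κ (outflow CSp.E3) := hkmem _ (by decide)
  have poW : 0 < κ (outflow CSp.Wstar) := hkmem _ (by decide)
  -- the four "open" coordinates agree
  have hE1eq : f 0 CSp.E1 = f 1 CSp.E1 := mul_left_cancel₀ po1.ne' (a5.symm.trans b5)
  have hE2eq : f 0 CSp.E2 = f 1 CSp.E2 := mul_left_cancel₀ po2.ne' (a6.symm.trans b6)
  have hE3eq : f 0 CSp.E3 = f 1 CSp.E3 := mul_left_cancel₀ po3.ne' (a7.symm.trans b7)
  have hWsEq : f 0 CSp.Wstar = f 1 CSp.Wstar := mul_left_cancel₀ poW.ne' (a8.symm.trans b8)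
  rw [← hE1eq] at b1
  rw [← hWsEq, ← hE2eq] at b2
  rw [← hWsEq] at b3
  rw [← hE3eq] at b4
  -- W*E2 agrees
  have hC2eq : f 0 CSp.WstarE2 = f 1 CSp.WstarE2 :=
    mul_left_cancel₀ (add_pos pk5 pk6).ne' (a2.symm.trans b2)
  rw [← hC2eq] at b9
  -- WE1 agrees
  have hC1eq : f 0 CSp.WE1 = f 1 CSp.WE1 :=
    mul_left_cancel₀ pk3.ne' (a9.trans b9.symm)
  rw [← hC1eq] at b1
  -- W agrees
  have hWeq : f 0 CSp.W = f 1 CSp.W := by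
    have h : (k1 * f 0 CSp.E1) * f 0 CSp.W = (k1 * f 0 CSp.E1) * f 1 CSp.W := by
      linear_combination a1 - b1
    exact mul_left_cancel₀ (mul_pos pk1 (pa CSp.E1)).ne' h
  -- the Z-chain: Z*, ZW*, Z*E3 are fixed positive multiples of Z
  have hAa : ((k8 + k9) * k12 * k10 * f 0 CSp.E3) * f 0 CSp.Zstar
      = ((k11 + k12) * k9 * k7 * f 0 CSp.Wstar) * f 0 CSp.Z := by
    linear_combination ((k8 + k9) * k12) * a4 - ((k11 + k12) * k9) * a3
      - ((k8 + k9) * (k11 + k12)) * a10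
  have hAb : ((k8 + k9) * k12 * k10 * f 0 CSp.E3) * f 1 CSp.Zstar
      = ((k11 + k12) * k9 * k7 * f 0 CSp.Wstar) * f 1 CSp.Z := by
    linear_combination ((k8 + k9) * k12) * b4 - ((k11 + k12) * k9) * b3
      - ((k8 + k9) * (k11 + k12)) * b10
  -- conservation of total Z
  have hsum : (f 1 CSp.Z - f 0 CSp.Z) + (f 1 CSp.Zstar - f 0 CSp.Zstar)
      + (f 1 CSp.ZWstar - f 0 CSp.ZWstar) + (f 1 CSp.ZstarE3 - f 0 CSp.ZstarE3) = 0 := by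
    have := casc_cons (f 1 - f 0) (hcomp 0 1)
    simpa [Pi.sub_apply] using this
  set A := (k8 + k9) * k12 * k10 * f 0 CSp.E3 with hA
  set B := (k11 + k12) * k9 * k7 * f 0 CSp.Wstar with hB
  have key : (A * k12 * (k8 + k9) + k12 * (k8 + k9) * B
      + A * k12 * k7 * f 0 CSp.Wstar + A * k9 * k7 * f 0 CSp.Wstar)
      * (f 1 CSp.Z - f 0 CSp.Z) = 0 := by
    linear_combination (A * k12 * (k8 + k9)) * hsum
      - (k12 * (k8 + k9)) * hAb + (k12 * (k8 + k9)) * hAa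
      + (A * k12 + A * k9) * b3 - (A * k12 + A * k9) * a3
      + (A * (k8 + k9)) * b10 - (A * (k8 + k9)) * a10
  have pA : 0 < A := by
    have := pa CSp.E3; positivity
  have pB : 0 < B := by
    have := pa CSp.Wstar; positivity
  have pD : 0 < A * k12 * (k8 + k9) + k12 * (k8 + k9) * B
      + A * k12 * k7 * f 0 CSp.Wstar + A * k9 * k7 * f 0 CSp.Wstar := by
    have := pa CSp.Wstar; positivity
  have hZeq : f 0 CSp.Z = f 1 CSp.Z := by
    rcases mul_eq_zero.1 key with h | h
    · exact absurd h pD.ne'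
    · linarith [sub_eq_zero.1 h]
  have hZsEq : f 0 CSp.Zstar = f 1 CSp.Zstar := by
    refine mul_left_cancel₀ pA.ne' ?_
    rw [hAa, hAb, hZeq]
  have hC3eq : f 0 CSp.ZWstar = f 1 CSp.ZWstar := by
    refine mul_left_cancel₀ (add_pos pk8 pk9).ne' ?_
    have h : (k8 + k9) * f 0 CSp.ZWstar = (k8 + k9) * f 1 CSp.ZWstar := by
      linear_combination b3 - a3 + (k7 * f 0 CSp.Wstar) * hZeq
    exact h
  have hC4eq : f 0 CSp.ZstarE3 = f 1 CSp.ZstarE3 := by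
    refine mul_left_cancel₀ pk12.ne' ?_
    linear_combination b10 - a10 + k9 * hC3eq
  have hfe : f 0 = f 1 := by
    funext s
    cases s with
    | W => exact hWeq
    | Wstar => exact hWsEq
    | Z => exact hZeq
    | Zstar => exact hZsEq
    | E1 => exact hE1eq
    | E2 => exact hE2eq
    | E3 => exact hE3eq
    | WE1 => exact hC1eq
    | WstarE2 => exact hC2eq
    | ZWstar => exact hC3eq
    | ZstarE3 => exact hC4eq
  exact absurd (hinj hfe) (by decide)

/-- The semi-open cascade network with `ℰ = {E₁, E₂, E₃, W*}` open is
monostationary with mass action kinetics. -/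
theorem cascade_enzyme_open_monostationary :
    monostationary (openOn cascade {CSp.E1, CSp.E2, CSp.E3, CSp.Wstar}) :=
  cascade_enzyme_open_monostationary'
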